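/- Let c_1, …, c_m be natural numbers with c_m ≥ 1 and c_i ≥ (3/2) · c_{i+1} for all 1 ≤ i < m. Then for every real t ≥ 3, Σ_{i=1}^m exp(−c_i · t / 3) ≤ 3 · e^{−t/3}. -/
import Mathlib


open Real

/-- Let `c 1, …, c m` be natural numbers with `c m ≥ 1` and `c i ≥ (3/2) · c (i+1)`
for all `1 ≤ i < m`. Then for every real `t ≥ 3`,
`∑ i, exp(−c i · t / 3) ≤ 3 · e^{−t/3}`. -/
theorem stmt7 (m : ℕ) (hm : 0 < m) (c : Fin m → ℕ)
    (hlast : 1 ≤ c ⟨m - 1, by omega⟩)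
    (hgeo : ∀ (i : Fin m) (h : i.val + 1 < m), (3 : ℝ) / 2 * c ⟨i.val + 1, h⟩ ≤ c i)
    (t : ℝ) (ht : 3 ≤ t) :
    (∑ i, Real.exp (-(c i * t) / 3)) ≤ 3 * Real.exp (-t / 3) := by
  set x := Real.exp (-t / 3) with hxdef
  have hx0 : 0 < x := Real.exp_pos _
  have hx2 : x ≤ 1 / 2 := by
    have h1 : Real.exp (-t / 3) ≤ Real.exp (-1) :=
      Real.exp_le_exp.mpr (by linarith)
    have h2 : (2 : ℝ) ≤ Real.exp 1 := by
      have := Real.add_one_le_exp 1; linarith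
    have h3 : Real.exp (-1) ≤ 1 / 2 := by
      rw [Real.exp_neg]
      rw [inv_le_comm₀ (by linarith) (by norm_num)]
      linarith
    linarith
  -- transfer to a plain ℕ-indexed function
  set d : ℕ → ℕ := fun j => if h : j < m then c ⟨j, h⟩ else 0 with hd
  have hdval : ∀ i : Fin m, d i.val = c i := by
    intro i; simp [hd, i.isLt]
  have hd_geo : ∀ j, j + 1 < m → 3 * d (j + 1) ≤ 2 * d j := by
    intro j hj
    have h2 : (3 : ℝ) / 2 * (c ⟨j + 1, hj⟩ : ℝ) ≤ (c ⟨j, by omega⟩ : ℝ) :=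
      hgeo ⟨j, by omega⟩ hj
    have e1 : d (j + 1) = c ⟨j + 1, hj⟩ := by simp [hd, hj]
    have e2 : d j = c ⟨j, by omega⟩ := by simp [hd, show j < m by omega]
    rw [e1, e2]
    have h3 : (3 : ℝ) * (c ⟨j + 1, hj⟩ : ℝ) ≤ 2 * (c ⟨j, by omega⟩ : ℝ) := by linarith
    exact_mod_cast h3
  have hd_last : 1 ≤ d (m - 1) := by
    have e : d (m - 1) = c ⟨m - 1, by omega⟩ := by simp [hd, show m - 1 < m by omega]
    rw [e]; exact hlast
  have key : ∀ k, k < m → k + 1 ≤ d (m - 1 - k) := by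
    intro k
    induction k with
    | zero => intro _; simpa using hd_last
    | succ k ih =>
      intro hk
      have h1 := ih (by omega)
      have h2 := hd_geo (m - 1 - (k + 1)) (by omega)
      have e : m - 1 - (k + 1) + 1 = m - 1 - k := by omega
      rw [e] at h2
      omega
  have hci : ∀ i : Fin m, m - i.val ≤ c i := by
    intro i
    have h := key (m - 1 - i.val) (by omega)
    rw [show m - 1 - (m - 1 - i.val) = i.val from by omega, hdval i] at h
    omega
  have hterm : ∀ i : Fin m, Real.exp (-(↑(c i) * t) / 3) = x ^ (c i) := by
    intro i
    rw [hxdef, ← Real.exp_nat_mul]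
    congr 1
    ring
  calc (∑ i, Real.exp (-(↑(c i) * t) / 3))
      = ∑ i : Fin m, x ^ (c i) := by
        exact Finset.sum_congr rfl fun i _ => hterm i
    _ ≤ ∑ i : Fin m, x ^ (m - i.val) := by
        apply Finset.sum_le_sum
        intro i _
        exact pow_le_pow_of_le_one hx0.le (by linarith) (hci i)
    _ = ∑ j ∈ Finset.range m, x ^ (m - j) := Fin.sum_univ_eq_sum_range (fun j => x ^ (m - j)) m
    _ = ∑ j ∈ Finset.range m, x ^ ((m - 1 - j) + 1) := by
        apply Finset.sum_congr rfl
        intro j hj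
        rw [Finset.mem_range] at hj
        congr 1
        omega
    _ = ∑ j ∈ Finset.range m, x ^ (j + 1) := Finset.sum_range_reflect (fun j => x ^ (j + 1)) m
    _ = x * ∑ j ∈ Finset.range m, x ^ j := by
        rw [Finset.mul_sum]
        exact Finset.sum_congr rfl fun j _ => by ring
    _ ≤ x * 2 := by
        apply mul_le_mul_of_nonneg_left _ hx0.le
        calc ∑ j ∈ Finset.range m, x ^ j
            ≤ ∑ j ∈ Finset.range m, (1 / 2 : ℝ) ^ j := by
              apply Finset.sum_le_sum
              intro j _
              exact pow_le_pow_left₀ hx0.le hx2 j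
          _ ≤ 2 := sum_geometric_two_le m
    _ ≤ 3 * x := by linarith
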